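/- arXiv:2210.17201 — 5 statements merged into one kernel-verified Lean document; each statement's English description precedes it below -/
import Mathlib

section
/- Let H be a Hilbert space, N \in \mathbb{N}, let q_{-N},\dots,q_N be mutually orthogonal orthogonal projections on H with sum e = \sum_{|k|\le N} q_k, let d_{-N},\dots,d_N be strictly positive reals, and let x be a positive bounded operator on H. Then 0 \le e x e \le \big(\sum_{|k|\le N} 1/d_k\big) \sum_{|k|\le N} d_k\, q_k x q_k in the Loewner order. -/
set_option synthInstance.maxHeartbeats 1000000
set_option maxHeartbeats 1000000

open ContinuousLinearMap RCLike
open scoped InnerProductSpace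

/-- Lemma `majdiag`: if `q_k` are mutually orthogonal projections on a Hilbert
space with sum `e`, `d_k > 0`, and `x ≥ 0`, then
`0 ≤ e x e ≤ (∑_k 1/d_k) ∑_k d_k q_k x q_k` in the Loewner order. -/
theorem majdiag {H : Type*} [NormedAddCommGroup H] [InnerProductSpace ℂ H] [CompleteSpace H]
    (N : ℕ) (q : Fin (2 * N + 1) → (H →L[ℂ] H))
    (hq_sa : ∀ k, IsSelfAdjoint (q k)) (hq_idem : ∀ k, IsIdempotentElem (q k))
    (hq_orth : ∀ i j, i ≠ j → q i * q j = 0)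
    (d : Fin (2 * N + 1) → ℝ) (hd : ∀ k, 0 < d k)
    (x : H →L[ℂ] H) (hx : x.IsPositive)
    (e : H →L[ℂ] H) (he : e = ∑ k, q k) :
    (e * x * e).IsPositive ∧
      ((((∑ k, 1 / d k : ℝ) : ℂ) • (∑ k, ((d k : ℝ) : ℂ) • (q k * x * q k)) - e * x * e)).IsPositive := by
  have he_sa : IsSelfAdjoint e := by
    rw [he, IsSelfAdjoint, star_sum]
    exact Finset.sum_congr rfl fun k _ => (hq_sa k)
  have h1 : (e * x * e).IsPositive := by
    have h := hx.adjoint_conj e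
    rw [he_sa.adjoint_eq] at h
    exact h
  refine ⟨h1, ?_⟩
  -- square root of x
  have hx0 : (0 : H →L[ℂ] H) ≤ x := (ContinuousLinearMap.nonneg_iff_isPositive x).2 hx
  set y : H →L[ℂ] H := CFC.sqrt x with hy
  have hy0 : (0 : H →L[ℂ] H) ≤ y := CFC.sqrt_nonneg x
  have hy_sa : IsSelfAdjoint y := .of_nonneg hy0
  have hyy : y * y = x := CFC.sqrt_mul_sqrt_self x hx0
  have key : ∀ (a : H →L[ℂ] H), IsSelfAdjoint a → ∀ v : H,
      re ⟪(a * x * a) v, v⟫_ℂ = ‖y (a v)‖ ^ 2 := by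
    intro a ha v
    have hh1 : ⟪(a * x * a) v, v⟫_ℂ = ⟪x (a v), a v⟫_ℂ := by
      have h0 := adjoint_inner_left a v (x (a v))
      rw [ha.adjoint_eq] at h0
      exact h0
    have hh2 : ⟪x (a v), a v⟫_ℂ = ⟪y (a v), y (a v)⟫_ℂ := by
      rw [← hyy]
      have h0 := adjoint_inner_left y (a v) (y (a v))
      rw [hy_sa.adjoint_eq] at h0
      exact h0
    rw [hh1, hh2, inner_self_eq_norm_sq]
  -- self-adjointness of the difference
  constructor
  · rw [← ContinuousLinearMap.isSelfAdjoint_iff_isSymmetric]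
    apply IsSelfAdjoint.sub
    · apply IsSelfAdjoint.smul
        (show star (((∑ k, 1 / d k : ℝ) : ℂ)) = _ by
          rw [Complex.star_def]; exact Complex.conj_ofReal _)
      rw [IsSelfAdjoint, star_sum]
      refine Finset.sum_congr rfl fun k _ => ?_
      rw [star_smul]
      simp only [Complex.star_def, Complex.conj_ofReal, star_mul, (hq_sa k).star_eq,
        hx.isSelfAdjoint.star_eq, mul_assoc]
    · exact h1.isSelfAdjoint
  · intro v
    rw [ContinuousLinearMap.reApplyInnerSelf]
    have hev : y (e v) = ∑ k, y (q k v) := by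
      rw [he, ContinuousLinearMap.sum_apply, map_sum]
    have hsum : re ⟪((∑ k, ((d k : ℝ) : ℂ) • (q k * x * q k))) v, v⟫_ℂ
        = ∑ k, d k * ‖y (q k v)‖ ^ 2 := by
      rw [ContinuousLinearMap.sum_apply, sum_inner, map_sum]
      refine Finset.sum_congr rfl fun k _ => ?_
      rw [ContinuousLinearMap.smul_apply, inner_smul_left, Complex.conj_ofReal,
        ← Complex.real_smul, RCLike.smul_re, key (q k) (hq_sa k) v]
    rw [ContinuousLinearMap.sub_apply, inner_sub_left, map_sub,
      ContinuousLinearMap.smul_apply, inner_smul_left, Complex.conj_ofReal,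
      ← Complex.real_smul, RCLike.smul_re, hsum, key e he_sa v, hev]
    -- now a real inequality
    set u : Fin (2 * N + 1) → H := fun k => y (q k v) with hu
    have h1' : ‖∑ k, u k‖ ≤ ∑ k, ‖u k‖ := norm_sum_le _ _
    have h2' : (∑ k, ‖u k‖) ^ 2 ≤ (∑ k, 1 / d k) * ∑ k, d k * ‖u k‖ ^ 2 := by
      calc (∑ k, ‖u k‖) ^ 2
          = (∑ k, Real.sqrt (1 / d k) * (Real.sqrt (d k) * ‖u k‖)) ^ 2 := by
            congr 1
            refine Finset.sum_congr rfl fun k _ => ?_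
            rw [← mul_assoc, ← Real.sqrt_mul (one_div_pos.mpr (hd k)).le, one_div,
              inv_mul_cancel₀ (hd k).ne', Real.sqrt_one, one_mul]
        _ ≤ (∑ k, Real.sqrt (1 / d k) ^ 2) * ∑ k, (Real.sqrt (d k) * ‖u k‖) ^ 2 :=
            Finset.sum_mul_sq_le_sq_mul_sq Finset.univ _ _
        _ = (∑ k, 1 / d k) * ∑ k, d k * ‖u k‖ ^ 2 := by
            congr 1
            · exact Finset.sum_congr rfl fun k _ => Real.sq_sqrt (one_div_pos.mpr (hd k)).le
            · refine Finset.sum_congr rfl fun k _ => ?_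
              rw [mul_pow, Real.sq_sqrt (hd k).le]
    have h3' : ‖∑ k, u k‖ ^ 2 ≤ (∑ k, ‖u k‖) ^ 2 :=
      pow_le_pow_left₀ (norm_nonneg _) h1' 2
    linarith
end

section
/- Let f, g, h : (0,\infty) \to [0,\infty) be non-increasing and suppose f(t) \le g(t) + h(t) for all t > 0. Then there exist non-increasing functions \alpha, \beta : (0,\infty) \to [0,\infty) with f = \alpha + \beta, \alpha \le g and \beta \le h pointwise. -/
open Set

/-- if `f ≤ g + h` pointwise on `(0,∞)` with `f, g, h` non-increasing and
nonnegative, then `f = α + β` with `α ≤ g`, `β ≤ h`, `α, β` non-increasing and nonnegative. -/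
theorem decomposition_of_majorized (f g h : ℝ → ℝ)
    (hf_mono : AntitoneOn f (Ioi 0)) (hg_mono : AntitoneOn g (Ioi 0))
    (hh_mono : AntitoneOn h (Ioi 0))
    (hf_nonneg : ∀ t ∈ Ioi (0:ℝ), 0 ≤ f t) (hg_nonneg : ∀ t ∈ Ioi (0:ℝ), 0 ≤ g t)
    (hh_nonneg : ∀ t ∈ Ioi (0:ℝ), 0 ≤ h t)
    (hfgh : ∀ t ∈ Ioi (0:ℝ), f t ≤ g t + h t) :
    ∃ α β : ℝ → ℝ, AntitoneOn α (Ioi 0) ∧ AntitoneOn β (Ioi 0) ∧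
      (∀ t ∈ Ioi (0:ℝ), 0 ≤ α t) ∧ (∀ t ∈ Ioi (0:ℝ), 0 ≤ β t) ∧
      (∀ t ∈ Ioi (0:ℝ), f t = α t + β t) ∧
      (∀ t ∈ Ioi (0:ℝ), α t ≤ g t) ∧ (∀ t ∈ Ioi (0:ℝ), β t ≤ h t) := by
  set q : ℝ → ℝ := fun s => max (f s - g s) 0 with hq
  set S : ℝ → Set ℝ := fun t => q '' (Ici t ∩ Ioi 0) with hS
  set β : ℝ → ℝ := fun t => sSup (S t) with hβ
  -- every element of S t is ≤ h t
  have hub : ∀ t ∈ Ioi (0:ℝ), ∀ x ∈ S t, x ≤ h t := by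
    rintro t ht x ⟨s, ⟨hs1, hs2⟩, rfl⟩
    have hts : t ≤ s := hs1
    have hqle : q s ≤ h s := by
      have h1 : f s - g s ≤ h s := by
        have := hfgh s hs2; linarith
      exact max_le h1 (hh_nonneg s hs2)
    exact hqle.trans (hh_mono ht hs2 hts)
  have hne : ∀ t ∈ Ioi (0:ℝ), (S t).Nonempty := fun t ht =>
    ⟨q t, ⟨t, ⟨le_refl t, ht⟩, rfl⟩⟩
  have hbdd : ∀ t ∈ Ioi (0:ℝ), BddAbove (S t) := fun t ht => ⟨h t, hub t ht⟩
  -- β t ≥ q t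
  have hβge : ∀ t ∈ Ioi (0:ℝ), q t ≤ β t := fun t ht =>
    le_csSup (hbdd t ht) ⟨t, ⟨le_refl t, ht⟩, rfl⟩
  have hβnonneg : ∀ t ∈ Ioi (0:ℝ), 0 ≤ β t := fun t ht =>
    le_trans (le_max_right _ _) (hβge t ht)
  have hβleh : ∀ t ∈ Ioi (0:ℝ), β t ≤ h t := fun t ht =>
    csSup_le (hne t ht) (hub t ht)
  have hβlef : ∀ t ∈ Ioi (0:ℝ), β t ≤ f t := by
    intro t ht
    apply csSup_le (hne t ht)
    rintro x ⟨s, ⟨hs1, hs2⟩, rfl⟩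
    have : q s ≤ f s := max_le (by linarith [hg_nonneg s hs2]) (hf_nonneg s hs2)
    exact this.trans (hf_mono ht hs2 hs1)
  have hβmono : AntitoneOn β (Ioi 0) := by
    intro t ht t' ht' htt'
    apply csSup_le_csSup (hbdd t ht)
    · exact hne t' ht'
    · rintro x ⟨s, ⟨hs1, hs2⟩, rfl⟩
      exact ⟨s, ⟨htt'.trans hs1, hs2⟩, rfl⟩
  -- key: α = f - β antitone
  have hαmono : AntitoneOn (fun t => f t - β t) (Ioi 0) := by
    intro t ht t' ht' htt'
    have key : β t ≤ β t' + (f t - f t') := by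
      apply csSup_le (hne t ht)
      rintro x ⟨s, ⟨hs1, hs2⟩, rfl⟩
      rcases le_total t' s with hcase | hcase
      · have : q s ≤ β t' := le_csSup (hbdd t' ht') ⟨s, ⟨hcase, hs2⟩, rfl⟩
        have hff : f t' ≤ f t := hf_mono ht ht' htt'
        linarith
      · -- s ≤ t'
        have h1 : f t' - g t' ≤ β t' := le_trans (le_max_left _ _) (hβge t' ht')
        have h2 : g t' ≤ g s := hg_mono hs2 ht' hcase
        have h3 : f s ≤ f t := hf_mono ht hs2 hs1
        have h4 : 0 ≤ β t' := hβnonneg t' ht'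
        have h5 : f t' ≤ f t := hf_mono ht ht' htt'
        rcases le_total (f s - g s) 0 with hc | hc
        · have : q s = 0 := max_eq_right hc
          rw [this]; linarith
        · have : q s = f s - g s := max_eq_left hc
          rw [this]; linarith
    dsimp only
    linarith
  refine ⟨fun t => f t - β t, β, hαmono, hβmono, ?_, hβnonneg, ?_, ?_, hβleh⟩
  · intro t ht; dsimp only; linarith [hβlef t ht]
  · intro t ht; ring
  · intro t ht; dsimp only
    have := hβge t ht
    have : f t - g t ≤ β t := le_trans (le_max_left _ _) this
    linarith
end

section
/- Let 1 \le p < \infty and let f_n : (0,\infty) \to [0,\infty) be measurable for n \in \mathbb{Z}, with f = \sum_{n\in\mathbb{Z}} f_n converging pointwise. If for every t > 0 one has \int_0^t g \le \sum_{n} \int_0^t f_n where g is non-increasing, and each f_n is non-increasing, then \|g\|_{L_p} \le \sum_n \|f_n\|_{L_p} whenever the right side is finite. -/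
open Set MeasureTheory
open scoped ENNReal

section HLaux

/-- rpow commutes with iSup for positive exponents. -/
lemma HL_iSup_rpow {ι : Sort*} (f : ι → ℝ≥0∞) {y : ℝ} (hy : 0 < y) :
    (⨆ i, f i) ^ y = ⨆ i, f i ^ y := by
  have h := OrderIso.map_iSup (ENNReal.orderIsoRpow y hy) f
  simp only [ENNReal.orderIsoRpow_apply] at h
  exact h

/-- The layer-cake measure computation. -/
lemma HL_volume_layer (a : ℝ≥0∞) :
    volume ({s : ℝ | ENNReal.ofReal s < a} ∩ Ioi 0) = a := by
  rcases eq_or_ne a ⊤ with rfl | ha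
  · have h : {s : ℝ | ENNReal.ofReal s < ⊤} ∩ Ioi 0 = Ioi 0 := by
      ext s; simp [ENNReal.ofReal_lt_top]
    rw [h, Real.volume_Ioi]
  · have h : {s : ℝ | ENNReal.ofReal s < a} ∩ Ioi 0 = Ioo 0 a.toReal := by
      ext s
      constructor
      · rintro ⟨h1, h2⟩
        exact ⟨h2, (ENNReal.ofReal_lt_iff_lt_toReal (le_of_lt h2) ha).1 h1⟩
      · rintro ⟨h2, h1⟩
        exact ⟨(ENNReal.ofReal_lt_iff_lt_toReal (le_of_lt h2) ha).2 h1, h2⟩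
    rw [h, Real.volume_Ioo, sub_zero, ENNReal.ofReal_toReal ha]

/-- lintegral over `Ioi 0` as sup of lintegrals over `Ioo 0 n`. -/
lemma HL_lintegral_Ioi_eq_iSup {G : ℝ → ℝ≥0∞} (hG : Measurable G) :
    ∫⁻ t in Ioi (0:ℝ), G t = ⨆ n : ℕ, ∫⁻ t in Ioo (0:ℝ) n, G t := by
  have h1 : ∫⁻ t in Ioi (0:ℝ), G t = ∫⁻ t, (Ioi (0:ℝ)).indicator G t :=
    (lintegral_indicator measurableSet_Ioi G).symm
  have h2 : ∀ n : ℕ, ∫⁻ t in Ioo (0:ℝ) n, G t = ∫⁻ t, (Ioo (0:ℝ) n).indicator G t :=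
    fun n => (lintegral_indicator measurableSet_Ioo G).symm
  rw [h1]
  simp_rw [h2]
  rw [← lintegral_iSup (fun n => hG.indicator measurableSet_Ioo)]
  · refine lintegral_congr fun t => ?_
    rcases le_or_gt t 0 with ht | ht
    · have e2 : ∀ n : ℕ, (Ioo (0:ℝ) (n:ℝ)).indicator G t = 0 := fun n =>
        Set.indicator_of_notMem (fun hmem => absurd hmem.1 (not_lt.2 ht)) G
      have e1 : (Ioi (0:ℝ)).indicator G t = 0 :=
        Set.indicator_of_notMem (fun hmem => absurd hmem (not_lt.2 ht)) G
      simp [e1, e2]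
    · obtain ⟨n, hn⟩ := exists_nat_gt t
      rw [Set.indicator_of_mem (Set.mem_Ioi.2 ht) G]
      refine le_antisymm (le_iSup_of_le n ?_) (iSup_le fun m => ?_)
      · rw [Set.indicator_of_mem (Set.mem_Ioo.2 ⟨ht, hn⟩) G]
      · rcases Classical.em (t ∈ Ioo (0:ℝ) (m:ℝ)) with hmem | hmem
        · rw [Set.indicator_of_mem hmem G]
        · rw [Set.indicator_of_notMem hmem G]; exact zero_le
  · intro n m hnm t
    exact Set.indicator_le_indicator_of_subset
      (Ioo_subset_Ioo le_rfl (Nat.cast_le.2 hnm)) (fun _ => zero_le) t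

/-- Majorization extends from initial open intervals to all "lower" subsets of `(0,∞)`. -/
lemma HL_setLIntegral_le_of_lower {g F : ℝ → ℝ≥0∞} (hg : Measurable g) (hF : Measurable F)
    (hm : ∀ a : ℝ, 0 < a → ∫⁻ t in Ioo (0:ℝ) a, g t ≤ ∫⁻ t in Ioo (0:ℝ) a, F t)
    (T : Set ℝ) (hT : T ⊆ Ioi 0)
    (hlow : ∀ ⦃t⦄, t ∈ T → ∀ ⦃t'⦄, 0 < t' → t' < t → t' ∈ T) :
    ∫⁻ t in T, g t ≤ ∫⁻ t in T, F t := by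
  rcases T.eq_empty_or_nonempty with rfl | hne
  · simp
  by_cases hbdd : BddAbove T
  · obtain ⟨t0, ht0⟩ := hne
    set a := sSup T with ha_def
    have ha0 : 0 < a := lt_of_lt_of_le (hT ht0) (le_csSup hbdd ht0)
    have hsub1 : Ioo 0 a ⊆ T := fun x hx => by
      obtain ⟨t, htT, hxt⟩ := exists_lt_of_lt_csSup ⟨t0, ht0⟩ hx.2
      exact hlow htT hx.1 hxt
    have hsub2 : T ⊆ Ioc 0 a := fun x hx => ⟨hT hx, le_csSup hbdd hx⟩
    have hae : T =ᵐ[volume] Ioo 0 a := by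
      rw [MeasureTheory.ae_eq_set]
      constructor
      · refine measure_mono_null (fun x hx => ?_) (Real.volume_singleton (a := a))
        have h1 := hsub2 hx.1
        have h2 := hx.2
        simp only [mem_Ioo, not_and, not_lt] at h2
        exact le_antisymm h1.2 (h2 h1.1)
      · rw [Set.diff_eq_empty.2 hsub1]; exact measure_empty
    rw [Measure.restrict_congr_set hae]
    exact hm a ha0
  · have hTeq : T = Ioi 0 := by
      refine Subset.antisymm hT fun x hx => ?_
      obtain ⟨t, htT, hxt⟩ := not_bddAbove_iff.1 hbdd x
      exact hlow htT hx hxt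
    subst hTeq
    rw [HL_lintegral_Ioi_eq_iSup hg, HL_lintegral_Ioi_eq_iSup hF]
    refine iSup_mono fun n => ?_
    rcases Nat.eq_zero_or_pos n with rfl | hn
    · simp
    · exact hm n (by exact_mod_cast hn)

/-- Key lemma: integrating against a non-increasing weight preserves majorization. -/
lemma HL_lintegral_mul_le_of_antitone {h g F : ℝ → ℝ≥0∞} (hh : Measurable h) (hg : Measurable g)
    (hF : Measurable F) (hanti : AntitoneOn h (Ioi 0))
    (hm : ∀ a : ℝ, 0 < a → ∫⁻ t in Ioo (0:ℝ) a, g t ≤ ∫⁻ t in Ioo (0:ℝ) a, F t) :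
    ∫⁻ t in Ioi (0:ℝ), h t * g t ≤ ∫⁻ t in Ioi (0:ℝ), h t * F t := by
  have key : ∀ G : ℝ → ℝ≥0∞, Measurable G →
      ∫⁻ t in Ioi (0:ℝ), h t * G t
        = ∫⁻ s in Ioi (0:ℝ), ∫⁻ t in {t : ℝ | ENNReal.ofReal s < h t} ∩ Ioi 0, G t := by
    intro G hG
    have hmeas_set : ∀ t : ℝ, MeasurableSet {s : ℝ | ENNReal.ofReal s < h t} :=
      fun t => ENNReal.measurable_ofReal measurableSet_Iio
    have hmeas_set2 : ∀ s : ℝ, MeasurableSet {t : ℝ | ENNReal.ofReal s < h t} :=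
      fun s => hh measurableSet_Ioi
    have stepA : ∀ t : ℝ, h t * G t
        = ∫⁻ s in Ioi (0:ℝ), (if ENNReal.ofReal s < h t then G t else 0) := by
      intro t
      have e : ∀ s : ℝ, (if ENNReal.ofReal s < h t then G t else 0)
          = ({s : ℝ | ENNReal.ofReal s < h t}).indicator (fun _ => G t) s := by
        intro s; rw [Set.indicator_apply]; rfl
      simp_rw [e]
      rw [lintegral_indicator (hmeas_set t), Measure.restrict_restrict (hmeas_set t),
        lintegral_const, Measure.restrict_apply_univ, HL_volume_layer, mul_comm]
    have stepB : ∀ s : ℝ, (∫⁻ t in Ioi (0:ℝ), (if ENNReal.ofReal s < h t then G t else 0))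
        = ∫⁻ t in {t : ℝ | ENNReal.ofReal s < h t} ∩ Ioi 0, G t := by
      intro s
      have e : ∀ t : ℝ, (if ENNReal.ofReal s < h t then G t else 0)
          = ({t : ℝ | ENNReal.ofReal s < h t}).indicator G t := by
        intro t; rw [Set.indicator_apply]; rfl
      simp_rw [e]
      rw [lintegral_indicator (hmeas_set2 s), Measure.restrict_restrict (hmeas_set2 s)]
    calc ∫⁻ t in Ioi (0:ℝ), h t * G t
        = ∫⁻ t in Ioi (0:ℝ), ∫⁻ s in Ioi (0:ℝ), (if ENNReal.ofReal s < h t then G t else 0) :=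
          lintegral_congr stepA
      _ = ∫⁻ s in Ioi (0:ℝ), ∫⁻ t in Ioi (0:ℝ), (if ENNReal.ofReal s < h t then G t else 0) := by
          refine lintegral_lintegral_swap ?_
          refine Measurable.aemeasurable ?_
          refine Measurable.ite ?_ (hG.comp measurable_fst) measurable_const
          exact measurableSet_lt (ENNReal.measurable_ofReal.comp measurable_snd)
            (hh.comp measurable_fst)
      _ = ∫⁻ s in Ioi (0:ℝ), ∫⁻ t in {t : ℝ | ENNReal.ofReal s < h t} ∩ Ioi 0, G t :=
          lintegral_congr stepB
  rw [key g hg, key F hF]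
  refine lintegral_mono fun s => ?_
  refine HL_setLIntegral_le_of_lower hg hF hm _ inter_subset_right ?_
  rintro t ⟨ht1, ht2⟩ t' ht' htt'
  exact ⟨lt_of_lt_of_le ht1 (hanti ht' ht2 (le_of_lt htt')), ht'⟩

/-- One-sided norm comparison for majorized non-increasing functions. -/
lemma HL_norm_le_norm {p : ℝ} (hp : 1 ≤ p) {g F : ℝ → ℝ≥0∞}
    (hg : Measurable g) (hF : Measurable F) (hg_mono : AntitoneOn g (Ioi 0))
    (hm : ∀ a : ℝ, 0 < a → ∫⁻ t in Ioo (0:ℝ) a, g t ≤ ∫⁻ t in Ioo (0:ℝ) a, F t) :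
    (∫⁻ t in Ioi (0:ℝ), g t ^ p) ^ (1/p) ≤ (∫⁻ t in Ioi (0:ℝ), F t ^ p) ^ (1/p) := by
  have hp0 : (0:ℝ) < p := lt_of_lt_of_le zero_lt_one hp
  rcases hp.eq_or_lt with rfl | hp1
  · simp only [one_div_one, ENNReal.rpow_one]
    exact HL_setLIntegral_le_of_lower hg hF hm (Ioi 0) subset_rfl (fun t _ t' ht' _ => ht')
  have hq : p.HolderConjugate p.conjExponent := Real.HolderConjugate.conjExponent hp1
  set q := p.conjExponent with hq_def
  have hq' : q.HolderConjugate p := hq.symm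
  have hp1' : (0:ℝ) ≤ p - 1 := by linarith
  have hsub : p - 1 ≠ 0 := ne_of_gt (by linarith)
  set B := ∫⁻ t in Ioi (0:ℝ), F t ^ p with hB
  set gN : ℕ → ℝ → ℝ≥0∞ := fun N t => if t ≤ (N:ℝ) then min (g t) (N:ℝ≥0∞) else 0 with hgN_def
  have hgN_meas : ∀ N, Measurable (gN N) := fun N =>
    Measurable.ite measurableSet_Iic (hg.min measurable_const) measurable_const
  have hgN_le : ∀ N t, gN N t ≤ g t := by
    intro N t; simp only [hgN_def]; split
    · exact min_le_left _ _
    · exact zero_le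
  have hgN_ne_top : ∀ N t, gN N t ≠ ⊤ := by
    intro N t; simp only [hgN_def]; split
    · exact ne_top_of_le_ne_top (ENNReal.natCast_ne_top N) (min_le_right _ _)
    · exact ENNReal.zero_ne_top
  have hgN_anti : ∀ N, AntitoneOn (gN N) (Ioi 0) := by
    intro N a ha b hb hab
    simp only [hgN_def]
    by_cases hbN : b ≤ (N:ℝ)
    · rw [if_pos hbN, if_pos (le_trans hab hbN)]
      exact min_le_min (hg_mono ha hb hab) le_rfl
    · rw [if_neg hbN]; exact zero_le
  have hgN_mono : ∀ t, Monotone fun N : ℕ => gN N t := by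
    intro t N M hNM
    simp only [hgN_def]
    by_cases htN : t ≤ (N:ℝ)
    · rw [if_pos htN, if_pos (le_trans htN (Nat.cast_le.2 hNM))]
      exact min_le_min le_rfl (Nat.cast_le.2 hNM)
    · rw [if_neg htN]; exact zero_le
  have hgN_sup : ∀ t, 0 < t → (⨆ N : ℕ, gN N t) = g t := by
    intro t ht
    refine le_antisymm (iSup_le fun N => hgN_le N t) ?_
    rcases eq_or_ne (g t) ⊤ with hgt | hgt
    · have hM : ∀ M : ℕ, (M:ℝ≥0∞) ≤ ⨆ N : ℕ, gN N t := by
        intro M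
        have h1 : t ≤ ((max M ⌈t⌉₊ : ℕ):ℝ) :=
          le_trans (Nat.le_ceil t) (Nat.cast_le.2 (le_max_right _ _))
        refine le_trans ?_ (le_iSup _ (max M ⌈t⌉₊))
        simp only [hgN_def]
        rw [if_pos h1, hgt, min_eq_right le_top]
        exact Nat.cast_le.2 (le_max_left _ _)
      calc g t = ⊤ := hgt
        _ = ⨆ M : ℕ, (M:ℝ≥0∞) := ENNReal.iSup_natCast.symm
        _ ≤ ⨆ N : ℕ, gN N t := iSup_le hM
    · obtain ⟨n, hn⟩ := ENNReal.exists_nat_gt hgt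
      have h1 : t ≤ ((max n ⌈t⌉₊ : ℕ):ℝ) :=
        le_trans (Nat.le_ceil t) (Nat.cast_le.2 (le_max_right _ _))
      have h2 : g t ≤ ((max n ⌈t⌉₊ : ℕ):ℝ≥0∞) :=
        le_trans (le_of_lt hn) (Nat.cast_le.2 (le_max_left _ _))
      refine le_trans ?_ (le_iSup _ (max n ⌈t⌉₊))
      simp only [hgN_def]
      rw [if_pos h1, min_eq_left h2]
  have hfin : ∀ N : ℕ, (∫⁻ t in Ioi (0:ℝ), gN N t ^ p) ≠ ⊤ := by
    intro N
    have hb : ∀ t : ℝ, gN N t ^ p ≤ (Iic (N:ℝ)).indicator (fun _ => (N:ℝ≥0∞) ^ p) t := by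
      intro t
      by_cases htN : t ≤ (N:ℝ)
      · rw [Set.indicator_of_mem (Set.mem_Iic.2 htN)]
        refine ENNReal.rpow_le_rpow ?_ (le_of_lt hp0)
        simp only [hgN_def]; rw [if_pos htN]; exact min_le_right _ _
      · simp only [hgN_def]; rw [if_neg htN, ENNReal.zero_rpow_of_pos hp0]
        exact zero_le
    refine ne_top_of_le_ne_top ?_ (lintegral_mono hb)
    rw [lintegral_indicator measurableSet_Iic, Measure.restrict_restrict measurableSet_Iic,
      lintegral_const, Measure.restrict_apply_univ]
    have hIic : Iic (N:ℝ) ∩ Ioi 0 = Ioc 0 (N:ℝ) := by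
      ext x; simp only [mem_inter_iff, mem_Iic, mem_Ioi, mem_Ioc]; tauto
    rw [hIic, Real.volume_Ioc]
    exact ENNReal.mul_ne_top
      (ENNReal.rpow_ne_top_of_nonneg (le_of_lt hp0) (ENNReal.natCast_ne_top N))
      ENNReal.ofReal_ne_top
  have hkey : ∀ N : ℕ, (∫⁻ t in Ioi (0:ℝ), gN N t ^ p) ≤ B := by
    intro N
    set A := ∫⁻ t in Ioi (0:ℝ), gN N t ^ p with hA_def
    have hmN : ∀ a : ℝ, 0 < a → ∫⁻ t in Ioo (0:ℝ) a, gN N t ≤ ∫⁻ t in Ioo (0:ℝ) a, F t :=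
      fun a ha => le_trans (lintegral_mono fun t => hgN_le N t) (hm a ha)
    have step1 : A = ∫⁻ t in Ioi (0:ℝ), gN N t ^ (p-1) * gN N t := by
      refine lintegral_congr fun t => ?_
      rcases eq_or_ne (gN N t) 0 with h0 | h0
      · rw [h0, ENNReal.zero_rpow_of_pos hp0, ENNReal.zero_rpow_of_pos (by linarith : (0:ℝ) < p - 1),
          mul_zero]
      · have e : gN N t ^ p = gN N t ^ (p-1) * gN N t ^ (1:ℝ) := by
          rw [← ENNReal.rpow_add _ _ h0 (hgN_ne_top N t)]; congr 1; ring
        rw [e, ENNReal.rpow_one]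
    have hpq : (p - 1) * q = p := by
      rw [hq_def, Real.conjExponent, mul_comm, div_mul_cancel₀ _ hsub]
    have step2 : ∫⁻ t in Ioi (0:ℝ), gN N t ^ (p-1) * gN N t
        ≤ ∫⁻ t in Ioi (0:ℝ), gN N t ^ (p-1) * F t :=
      HL_lintegral_mul_le_of_antitone ((hgN_meas N).pow_const _) (hgN_meas N) hF
        (fun a ha b hb hab => ENNReal.rpow_le_rpow (hgN_anti N ha hb hab) hp1') hmN
    have step3 : ∫⁻ t in Ioi (0:ℝ), gN N t ^ (p-1) * F t ≤ A ^ (1/q) * B ^ (1/p) := by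
      have hEq : (∫⁻ t in Ioi (0:ℝ), (gN N t ^ (p-1)) ^ q) = A := by
        rw [hA_def]; refine lintegral_congr fun t => ?_
        rw [← ENNReal.rpow_mul, hpq]
      have hh := ENNReal.lintegral_mul_le_Lp_mul_Lq (volume.restrict (Ioi (0:ℝ))) hq'
        (f := fun t => gN N t ^ (p-1)) (g := F)
        (((hgN_meas N).pow_const (p-1)).aemeasurable) hF.aemeasurable
      calc ∫⁻ t in Ioi (0:ℝ), gN N t ^ (p-1) * F t
          ≤ (∫⁻ t in Ioi (0:ℝ), (gN N t ^ (p-1)) ^ q) ^ (1/q)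
            * (∫⁻ t in Ioi (0:ℝ), F t ^ p) ^ (1/p) := hh
        _ = A ^ (1/q) * B ^ (1/p) := by rw [hEq]
    rcases eq_or_ne A 0 with hA0 | hA0
    · rw [hA0]; exact zero_le
    have hAtop : A ≠ ⊤ := hfin N
    have hchain : A ≤ A ^ (1/q) * B ^ (1/p) := by
      calc A = ∫⁻ t in Ioi (0:ℝ), gN N t ^ (p-1) * gN N t := step1
        _ ≤ ∫⁻ t in Ioi (0:ℝ), gN N t ^ (p-1) * F t := step2
        _ ≤ A ^ (1/q) * B ^ (1/p) := step3
    have hA_split : A = A ^ (1/q) * A ^ (1/p) := by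
      rw [← ENNReal.rpow_add _ _ hA0 hAtop,
        show 1/q + 1/p = 1 by rw [one_div, one_div, add_comm]; exact hq.inv_add_inv_eq_one,
        ENNReal.rpow_one]
    have hcancel : A ^ (1/p) ≤ B ^ (1/p) := by
      have h1 : A ^ (1/q) * A ^ (1/p) ≤ A ^ (1/q) * B ^ (1/p) := by
        rw [← hA_split]; exact hchain
      have hq0 : A ^ (1/q) ≠ 0 := by
        simp [ENNReal.rpow_eq_zero_iff, hA0, hAtop]
      have hqt : A ^ (1/q) ≠ ⊤ :=
        ENNReal.rpow_ne_top_of_nonneg (le_of_lt (one_div_pos.2 hq'.pos)) hAtop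
      exact (ENNReal.mul_le_mul_iff_right hq0 hqt).1 h1
    have h2 := ENNReal.rpow_le_rpow hcancel (le_of_lt hp0)
    rwa [← ENNReal.rpow_mul, ← ENNReal.rpow_mul, one_div_mul_cancel (ne_of_gt hp0),
      ENNReal.rpow_one, ENNReal.rpow_one] at h2
  have hsup_int : (∫⁻ t in Ioi (0:ℝ), g t ^ p) = ⨆ N : ℕ, ∫⁻ t in Ioi (0:ℝ), gN N t ^ p := by
    rw [← lintegral_iSup (fun N => (hgN_meas N).pow_const p)
      (fun N M hNM t => ENNReal.rpow_le_rpow (hgN_mono t hNM) (le_of_lt hp0))]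
    refine setLIntegral_congr_fun measurableSet_Ioi (fun t ht => ?_)
    rw [← HL_iSup_rpow _ hp0, hgN_sup t ht]
  rw [hsup_int]
  exact ENNReal.rpow_le_rpow (iSup_le hkey) (le_of_lt (one_div_pos.2 hp0))

/-- Minkowski inequality for countable sums. -/
lemma HL_tsum_minkowski {p : ℝ} (hp : 1 ≤ p) (f : ℤ → ℝ → ℝ≥0∞)
    (hf : ∀ n, Measurable (f n)) (μ : Measure ℝ) :
    (∫⁻ t, (∑' n : ℤ, f n t) ^ p ∂μ) ^ (1/p) ≤ ∑' n : ℤ, (∫⁻ t, f n t ^ p ∂μ) ^ (1/p) := by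
  classical
  have hp0 : (0:ℝ) < p := lt_of_lt_of_le zero_lt_one hp
  have hfin : ∀ s : Finset ℤ, (∫⁻ t, (∑ n ∈ s, f n t) ^ p ∂μ) ^ (1/p)
      ≤ ∑ n ∈ s, (∫⁻ t, f n t ^ p ∂μ) ^ (1/p) := by
    intro s
    induction s using Finset.induction_on with
    | empty =>
        simp only [Finset.sum_empty, ENNReal.zero_rpow_of_pos hp0, lintegral_zero,
          ENNReal.zero_rpow_of_pos (one_div_pos.2 hp0), le_refl, Finset.sum_const_zero]
    | @insert a s hns ih =>
        calc (∫⁻ t, (∑ n ∈ insert a s, f n t) ^ p ∂μ) ^ (1/p)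
            = (∫⁻ t, ((f a + fun t' => ∑ n ∈ s, f n t') t) ^ p ∂μ) ^ (1/p) := by
              congr 1
              exact lintegral_congr fun t => by
                simp [Finset.sum_insert hns]
          _ ≤ (∫⁻ t, f a t ^ p ∂μ) ^ (1/p) + (∫⁻ t, (∑ n ∈ s, f n t) ^ p ∂μ) ^ (1/p) :=
              ENNReal.lintegral_Lp_add_le (hf a).aemeasurable
                (Finset.measurable_sum s fun n _ => hf n).aemeasurable hp
          _ ≤ ∑ n ∈ insert a s, (∫⁻ t, f n t ^ p ∂μ) ^ (1/p) := by
              rw [Finset.sum_insert hns]; exact add_le_add_right ih _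
  have hdir : Directed (· ≤ ·) (fun s : Finset ℤ => fun t => (∑ n ∈ s, f n t) ^ p) := by
    intro s u
    refine ⟨s ∪ u, fun t => ?_, fun t => ?_⟩
    · exact ENNReal.rpow_le_rpow
        (Finset.sum_le_sum_of_subset Finset.subset_union_left) hp0.le
    · exact ENNReal.rpow_le_rpow
        (Finset.sum_le_sum_of_subset Finset.subset_union_right) hp0.le
  have h1 : (∫⁻ t, (∑' n : ℤ, f n t) ^ p ∂μ)
      = ⨆ s : Finset ℤ, ∫⁻ t, (∑ n ∈ s, f n t) ^ p ∂μ := by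
    rw [← lintegral_iSup_directed
      (fun s => ((Finset.measurable_sum s fun n _ => hf n).pow_const p).aemeasurable) hdir]
    refine lintegral_congr fun t => ?_
    rw [ENNReal.tsum_eq_iSup_sum, HL_iSup_rpow _ hp0]
  rw [h1, HL_iSup_rpow _ (one_div_pos.2 hp0)]
  exact iSup_le fun s => le_trans (hfin s) (ENNReal.sum_le_tsum s)

end HLaux

/-- Hardy–Littlewood majorization: if `g` and the `f_n` are non-increasing on
`(0,∞)` and `∫₀ᵗ g ≤ ∑_n ∫₀ᵗ f_n` for all `t > 0`, then for `1 ≤ p < ∞`,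
`‖g‖_p ≤ ∑_n ‖f_n‖_p`. (Values in `[0,∞]`, so the inequality is trivial when the right-hand
side is infinite.) -/
theorem lp_norm_le_of_majorized (p : ℝ) (hp : 1 ≤ p)
    (f : ℤ → ℝ → ℝ≥0∞) (g : ℝ → ℝ≥0∞)
    (hf_meas : ∀ n, Measurable (f n)) (hg_meas : Measurable g)
    (hf_mono : ∀ n, AntitoneOn (f n) (Ioi 0)) (hg_mono : AntitoneOn g (Ioi 0))
    (hmaj : ∀ t ∈ Ioi (0:ℝ), ∫⁻ s in Ioo 0 t, g s ≤ ∑' n : ℤ, ∫⁻ s in Ioo 0 t, f n s) :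
    (∫⁻ t in Ioi (0:ℝ), g t ^ p) ^ (1 / p) ≤
      ∑' n : ℤ, (∫⁻ t in Ioi (0:ℝ), f n t ^ p) ^ (1 / p) := by
  have hF_meas : Measurable fun t => ∑' n : ℤ, f n t := Measurable.ennreal_tsum hf_meas
  have hmF : ∀ a : ℝ, 0 < a →
      ∫⁻ t in Ioo (0:ℝ) a, g t ≤ ∫⁻ t in Ioo (0:ℝ) a, ∑' n : ℤ, f n t := by
    intro a ha
    rw [lintegral_tsum fun n => (hf_meas n).aemeasurable]
    exact hmaj a ha
  exact le_trans (HL_norm_le_norm hp hg_meas hF_meas hg_mono hmF)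
    (HL_tsum_minkowski hp f hf_meas (volume.restrict (Ioi 0)))
end

section
/- There is no positive semidefinite compact operator A on \ell_2 with A_{nn} \to 0 as n \to \infty such that -A \le T_n \le A for all n \ge 2, where T_n = e_{n,1} + e_{1,n}. More precisely, if A is a positive operator on \ell_2 with -A \le T_n \le A for all n \ge 2, then A_{1,1} A_{n,n} \ge 1 for all n \ge 2. -/
open scoped InnerProductSpace

/-- with `T_n = e_{n,1} + e_{1,n}` (matrix units in an orthonormal family
`(δ_k)` of a Hilbert space), if `A` is a positive operator with `-A ≤ T_n ≤ A` for all
`n ≥ 2`, then `A_{1,1} A_{n,n} ≥ 1` for all `n ≥ 2` (so no such `A` can have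
`A_{n,n} → 0`). -/
theorem no_positive_majorant_of_matrix_units
    {H : Type*} [NormedAddCommGroup H] [InnerProductSpace ℂ H] [CompleteSpace H]
    (δ : ℕ → H) (hδ : Orthonormal ℂ δ)
    (T : ℕ → (H →L[ℂ] H))
    (hT : ∀ n, T n = ((innerSL ℂ (δ 1)).smulRight (δ n)) + ((innerSL ℂ (δ n)).smulRight (δ 1)))
    (A : H →L[ℂ] H) (hA : A.IsPositive)
    (hmaj : ∀ n, 2 ≤ n → (A - T n).IsPositive ∧ (A + T n).IsPositive) :
    ∀ n, 2 ≤ n → 1 ≤ (⟪A (δ 1), δ 1⟫_ℂ).re * (⟪A (δ n), δ n⟫_ℂ).re := by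
  intro n hn
  have hn1 : (1:ℕ) ≠ n := by omega
  have hite := orthonormal_iff_ite.mp hδ
  set a := (⟪A (δ 1), δ 1⟫_ℂ).re with ha
  set b := (⟪A (δ n), δ n⟫_ℂ).re with hb
  have key : ∀ t s : ℝ, 2*(t*s) ≤ t^2*a + s^2*b := by
    intro t s
    have h1 := (Complex.le_def.mp (((hmaj n hn).1).inner_nonneg_left ((t:ℂ)•δ 1 + (s:ℂ)•δ n))).1
    have h2 := (Complex.le_def.mp (((hmaj n hn).2).inner_nonneg_left ((t:ℂ)•δ 1 - (s:ℂ)•δ n))).1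
    simp only [hT, ContinuousLinearMap.sub_apply, ContinuousLinearMap.add_apply,
      ContinuousLinearMap.smulRight_apply, innerSL_apply_apply, map_add, map_sub, map_smul,
      inner_add_left, inner_add_right, inner_sub_left, inner_sub_right,
      inner_smul_left, inner_smul_right, hite, if_pos, if_neg hn1, if_neg (Ne.symm hn1)] at h1 h2
    simp only [RCLike.re_to_complex, map_one, map_zero, Complex.conj_ofReal,
      Complex.add_re, Complex.sub_re, Complex.neg_re, Complex.mul_re,
      Complex.ofReal_re, Complex.ofReal_im, Complex.one_re, Complex.one_im,
      Complex.zero_re, Complex.zero_im] at h1 h2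
    ring_nf at h1 h2 ⊢
    linarith [h1, h2]
  have ha0 : 0 < a := by
    by_contra h
    push_neg at h
    nlinarith [key (|b|+1) 1, abs_nonneg b, le_abs_self b, sq_nonneg (|b|+1), sq_nonneg (|b|-1)]
  have hinv : a * (1/a) = 1 := by field_simp
  nlinarith [key (1/a) 1, hinv, ha0, sq_nonneg (1/a)]
end

section
/- Let H be a Hilbert space and a \in B(H) positive with a^2 \ge 1 (so a is invertible). Let H = \bigoplus_{i=1}^N H_i be an orthogonal decomposition with projections p_i, and suppose that for every choice of contractions c_i \in B(H_i, H), the operator b = \sum_i c_i p_i satisfies b^* b \le a^2. Then for every \xi = (\xi_i) \in H, \|a\xi\|_H \ge \sum_{i=1}^N \|\xi_i\|_{H_i}. -/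
/-- let `H = ⊕ᵢ Hᵢ` with orthogonal projections `pᵢ` (mutually orthogonal,
summing to `1`), and let `a ≥ 0` with `a² ≥ 1`. If `b*b ≤ a²` for every
`b = ∑ᵢ cᵢ pᵢ` with contractions `cᵢ`, then `‖aξ‖ ≥ ∑ᵢ ‖pᵢξ‖` for every `ξ ∈ H`. -/
theorem norm_lower_bound_of_dominating (N : ℕ)
    {H : Type*} [NormedAddCommGroup H] [InnerProductSpace ℂ H] [CompleteSpace H]
    (p : Fin N → (H →L[ℂ] H))
    (hp_sa : ∀ i, IsSelfAdjoint (p i)) (hp_idem : ∀ i, IsIdempotentElem (p i))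
    (hp_orth : ∀ i j, i ≠ j → p i * p j = 0) (hp_sum : (∑ i, p i) = 1)
    (a : H →L[ℂ] H) (ha : a.IsPositive) (ha1 : (a * a - 1).IsPositive)
    (hdom : ∀ c : Fin N → (H →L[ℂ] H), (∀ i, ‖c i‖ ≤ 1) →
      (a * a - ContinuousLinearMap.adjoint (∑ i, c i * p i) * (∑ i, c i * p i)).IsPositive) :
    ∀ ξ : H, (∑ i, ‖p i ξ‖) ≤ ‖a ξ‖ := by
  intro ξ
  by_cases hξ : ξ = 0
  · simp [hξ]
  · set η : H := ‖ξ‖⁻¹ • ξ with hη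
    have hηnorm : ‖η‖ = 1 := by
      simp [hη, norm_smul, inv_mul_cancel₀ (norm_ne_zero_iff.mpr hξ)]
    set c : Fin N → (H →L[ℂ] H) := fun i =>
      (((‖p i ξ‖ : ℂ)⁻¹ • (innerSL ℂ (p i ξ))).smulRight η) with hc
    have hcnorm : ∀ i, ‖c i‖ ≤ 1 := by
      intro i
      rw [hc]
      simp only [ContinuousLinearMap.norm_smulRight_apply, norm_smul, innerSL_apply_norm,
        hηnorm, mul_one]
      rcases eq_or_ne (p i ξ) 0 with h | h
      · simp [h]
      · rw [norm_inv, Complex.norm_real, Real.norm_eq_abs, abs_norm,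
          inv_mul_cancel₀ (norm_ne_zero_iff.mpr h)]
    set b := ∑ i, c i * p i with hb
    have hciapp : ∀ i, c i (p i ξ) = (‖p i ξ‖ : ℂ) • η := by
      intro i
      simp only [hc, ContinuousLinearMap.smulRight_apply, ContinuousLinearMap.smul_apply,
        innerSL_apply_apply, smul_eq_mul]
      rcases eq_or_ne (p i ξ) 0 with h | h
      · simp [h]
      · have hne : (‖p i ξ‖ : ℂ) ≠ 0 := by exact_mod_cast norm_ne_zero_iff.mpr h
        rw [inner_self_eq_norm_sq_to_K]
        congr 1
        norm_cast
        push_cast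
        rw [pow_two, ← mul_assoc]
        exact (congrArg (· * (‖p i ξ‖ : ℂ)) (inv_mul_cancel₀ hne)).trans (one_mul _)
    have hbξ : b ξ = ((∑ i, ‖p i ξ‖ : ℝ) : ℂ) • η := by
      rw [hb, ContinuousLinearMap.sum_apply]
      push_cast
      rw [Finset.sum_smul]
      exact Finset.sum_congr rfl fun i _ => by
        rw [Function.comp_apply, hciapp i]
    have hbnorm : ‖b ξ‖ = ∑ i, ‖p i ξ‖ := by
      rw [hbξ, norm_smul, hηnorm, mul_one, Complex.norm_real, Real.norm_eq_abs,
        abs_of_nonneg (Finset.sum_nonneg fun i _ => norm_nonneg _)]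
    have hpos := (hdom c hcnorm).2 ξ
    rw [ContinuousLinearMap.reApplyInnerSelf_apply] at hpos
    have hexp : ((a * a - ContinuousLinearMap.adjoint b * b) ξ) = a (a ξ) - ContinuousLinearMap.adjoint b (b ξ) := rfl
    rw [hexp, inner_sub_left] at hpos
    have h1 : (inner ℂ (a (a ξ)) ξ : ℂ) = inner ℂ (a ξ) (a ξ) := by
      nth_rewrite 1 [← ha.isSelfAdjoint.adjoint_eq]
      exact ContinuousLinearMap.adjoint_inner_left a ξ (a ξ)
    have h2 : (inner ℂ (ContinuousLinearMap.adjoint b (b ξ)) ξ : ℂ) = inner ℂ (b ξ) (b ξ) := by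
      rw [ContinuousLinearMap.adjoint_inner_left]
    rw [h1, h2, inner_self_eq_norm_sq_to_K, inner_self_eq_norm_sq_to_K] at hpos
    have hfin : ‖b ξ‖ ^ 2 ≤ ‖a ξ‖ ^ 2 := by
      norm_cast at hpos
      linarith
    rw [← hbnorm]
    exact (pow_le_pow_iff_left₀ (norm_nonneg _) (norm_nonneg _) two_ne_zero).mp hfin
end
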